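/- arXiv:2003.00468 — 2 statements merged into one kernel-verified Lean document; each statement's English description precedes it below -/
import Mathlib

section
/- Fix n and strings x, y ∈ {0,1}^{k²} with k = Θ(n), and let G_{x,y} be the gadget graph defined below. Then G_{x,y} is isomorphic to G_{x',y'} if and only if x = x' and y = y'. In particular, the map (x,y) ↦ isomorphism class of G_{x,y} is injective, so the vertex labels of G_{x,y} (equivalently, the sets A and B) can be uniquely recovered from the unlabeled structure of G_{x,y}. -/
/-- Vertex type of the gadget graph `G_{A,B}`. -/
inductive GadgetV (k : ℕ) where
  | a1 (i : Fin k) | a2 (i : Fin k) | u | up | upp | tA1 | tA2 | tu1 | tu2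
  | b1 (i : Fin k) | b2 (i : Fin k) | v | vp | vpp | tB1 | tB2 | tv1 | tv2 | tv3
  deriving DecidableEq, Fintype

open GadgetV in
/-- Base (asymmetric) edge relation of the gadget graph `G_{A,B}`. -/
def gadgetRel {k : ℕ} (A B : Finset (Fin k × Fin k)) : GadgetV k → GadgetV k → Bool
  | a1 i, a1 j => i.val + 1 == j.val
  | a2 i, a2 j => i.val + 1 == j.val
  | u, a1 _ => true
  | upp, a2 _ => true
  | u, up => true
  | up, upp => true
  | u, tu1 => true
  | u, tu2 => true
  | a1 i, tA1 => i.val == 0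
  | a2 i, tA2 => i.val == 0
  | a1 i, a2 j => decide ((i, j) ∈ A)
  | b1 i, b1 j => i.val + 1 == j.val
  | b2 i, b2 j => i.val + 1 == j.val
  | v, b1 _ => true
  | vpp, b2 _ => true
  | v, vp => true
  | vp, vpp => true
  | v, tv1 => true
  | v, tv2 => true
  | v, tv3 => true
  | b1 i, tB1 => i.val == 0
  | b2 i, tB2 => i.val == 0
  | b1 i, b2 j => decide ((i, j) ∈ B)
  | u, v => true
  | _, _ => false

/-- The gadget graph `G_{A,B}`. -/
def gadgetGraph {k : ℕ} (A B : Finset (Fin k × Fin k)) : SimpleGraph (GadgetV k) :=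
  SimpleGraph.fromRel (fun x y => gadgetRel A B x y = true)

namespace GadgetProof
open GadgetV SimpleGraph
variable {k : ℕ} {A B : Finset (Fin k × Fin k)}

lemma adj_iff (x y : GadgetV k) :
    (gadgetGraph A B).Adj x y ↔ x ≠ y ∧ (gadgetRel A B x y = true ∨ gadgetRel A B y x = true) :=
  SimpleGraph.fromRel_adj _ _ _

lemma adj_u {y : GadgetV k} :
    (gadgetGraph A B).Adj u y ↔ (∃ i, y = a1 i) ∨ y = up ∨ y = tu1 ∨ y = tu2 ∨ y = v := by
  cases y <;> rw [adj_iff] <;> unfold gadgetRel <;> simp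

lemma adj_up {y : GadgetV k} :
    (gadgetGraph A B).Adj up y ↔ y = u ∨ y = upp := by
  cases y <;> rw [adj_iff] <;> unfold gadgetRel <;> simp

lemma adj_upp {y : GadgetV k} :
    (gadgetGraph A B).Adj upp y ↔ (∃ i, y = a2 i) ∨ y = up := by
  cases y <;> rw [adj_iff] <;> unfold gadgetRel <;> simp

lemma adj_v {y : GadgetV k} :
    (gadgetGraph A B).Adj v y ↔ (∃ i, y = b1 i) ∨ y = vp ∨ y = tv1 ∨ y = tv2 ∨ y = tv3 ∨ y = u := by
  cases y <;> rw [adj_iff] <;> unfold gadgetRel <;> simp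

lemma adj_vp {y : GadgetV k} :
    (gadgetGraph A B).Adj vp y ↔ y = v ∨ y = vpp := by
  cases y <;> rw [adj_iff] <;> unfold gadgetRel <;> simp

lemma adj_vpp {y : GadgetV k} :
    (gadgetGraph A B).Adj vpp y ↔ (∃ i, y = b2 i) ∨ y = vp := by
  cases y <;> rw [adj_iff] <;> unfold gadgetRel <;> simp

lemma adj_a1 {i : Fin k} {y : GadgetV k} :
    (gadgetGraph A B).Adj (a1 i) y ↔
      (∃ j, y = a1 j ∧ (i.val + 1 = j.val ∨ j.val + 1 = i.val)) ∨
      (∃ j, y = a2 j ∧ (i, j) ∈ A) ∨ y = u ∨ (y = tA1 ∧ i.val = 0) := by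
  cases y <;> rw [adj_iff] <;> unfold gadgetRel <;> simp <;> simp [Fin.ext_iff] <;> omega

lemma adj_a2 {i : Fin k} {y : GadgetV k} :
    (gadgetGraph A B).Adj (a2 i) y ↔
      (∃ j, y = a2 j ∧ (i.val + 1 = j.val ∨ j.val + 1 = i.val)) ∨
      (∃ j, y = a1 j ∧ (j, i) ∈ A) ∨ y = upp ∨ (y = tA2 ∧ i.val = 0) := by
  cases y <;> rw [adj_iff] <;> unfold gadgetRel <;> simp <;> simp [Fin.ext_iff] <;> omega

lemma adj_b1 {i : Fin k} {y : GadgetV k} :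
    (gadgetGraph A B).Adj (b1 i) y ↔
      (∃ j, y = b1 j ∧ (i.val + 1 = j.val ∨ j.val + 1 = i.val)) ∨
      (∃ j, y = b2 j ∧ (i, j) ∈ B) ∨ y = v ∨ (y = tB1 ∧ i.val = 0) := by
  cases y <;> rw [adj_iff] <;> unfold gadgetRel <;> simp <;> simp [Fin.ext_iff] <;> omega

lemma adj_b2 {i : Fin k} {y : GadgetV k} :
    (gadgetGraph A B).Adj (b2 i) y ↔
      (∃ j, y = b2 j ∧ (i.val + 1 = j.val ∨ j.val + 1 = i.val)) ∨
      (∃ j, y = b1 j ∧ (j, i) ∈ B) ∨ y = vpp ∨ (y = tB2 ∧ i.val = 0) := by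
  cases y <;> rw [adj_iff] <;> unfold gadgetRel <;> simp <;> simp [Fin.ext_iff] <;> omega

lemma adj_tA1 {y : GadgetV k} :
    (gadgetGraph A B).Adj tA1 y ↔ ∃ i : Fin k, y = a1 i ∧ i.val = 0 := by
  cases y <;> rw [adj_iff] <;> unfold gadgetRel <;> simp

lemma adj_tA2 {y : GadgetV k} :
    (gadgetGraph A B).Adj tA2 y ↔ ∃ i : Fin k, y = a2 i ∧ i.val = 0 := by
  cases y <;> rw [adj_iff] <;> unfold gadgetRel <;> simp

lemma adj_tB1 {y : GadgetV k} :
    (gadgetGraph A B).Adj tB1 y ↔ ∃ i : Fin k, y = b1 i ∧ i.val = 0 := by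
  cases y <;> rw [adj_iff] <;> unfold gadgetRel <;> simp

lemma adj_tB2 {y : GadgetV k} :
    (gadgetGraph A B).Adj tB2 y ↔ ∃ i : Fin k, y = b2 i ∧ i.val = 0 := by
  cases y <;> rw [adj_iff] <;> unfold gadgetRel <;> simp

lemma adj_tu1 {y : GadgetV k} : (gadgetGraph A B).Adj tu1 y ↔ y = u := by
  cases y <;> rw [adj_iff] <;> unfold gadgetRel <;> simp

lemma adj_tu2 {y : GadgetV k} : (gadgetGraph A B).Adj tu2 y ↔ y = u := by
  cases y <;> rw [adj_iff] <;> unfold gadgetRel <;> simp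

lemma adj_tv1 {y : GadgetV k} : (gadgetGraph A B).Adj tv1 y ↔ y = v := by
  cases y <;> rw [adj_iff] <;> unfold gadgetRel <;> simp

lemma adj_tv2 {y : GadgetV k} : (gadgetGraph A B).Adj tv2 y ↔ y = v := by
  cases y <;> rw [adj_iff] <;> unfold gadgetRel <;> simp

lemma adj_tv3 {y : GadgetV k} : (gadgetGraph A B).Adj tv3 y ↔ y = v := by
  cases y <;> rw [adj_iff] <;> unfold gadgetRel <;> simp


/-! ### Tails -/

def IsTail : GadgetV k → Prop := fun x =>
  x = tA1 ∨ x = tA2 ∨ x = tu1 ∨ x = tu2 ∨ x = tB1 ∨ x = tB2 ∨ x = tv1 ∨ x = tv2 ∨ x = tv3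

lemma tail_unique (hk : 0 < k) {x : GadgetV k} (hx : IsTail x) :
    ∃! y, (gadgetGraph A B).Adj x y := by
  rcases hx with rfl|rfl|rfl|rfl|rfl|rfl|rfl|rfl|rfl
  · refine ⟨a1 ⟨0, hk⟩, ?_, ?_⟩
    · exact adj_tA1.mpr ⟨_, rfl, rfl⟩
    · rintro y hy; rw [adj_tA1] at hy; obtain ⟨i, rfl, hi⟩ := hy
      exact congrArg a1 (Fin.ext hi)
  · refine ⟨a2 ⟨0, hk⟩, ?_, ?_⟩
    · exact adj_tA2.mpr ⟨_, rfl, rfl⟩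
    · rintro y hy; rw [adj_tA2] at hy; obtain ⟨i, rfl, hi⟩ := hy
      exact congrArg a2 (Fin.ext hi)
  · exact ⟨u, adj_tu1.mpr rfl, fun y hy => adj_tu1.mp hy⟩
  · exact ⟨u, adj_tu2.mpr rfl, fun y hy => adj_tu2.mp hy⟩
  · refine ⟨b1 ⟨0, hk⟩, ?_, ?_⟩
    · exact adj_tB1.mpr ⟨_, rfl, rfl⟩
    · rintro y hy; rw [adj_tB1] at hy; obtain ⟨i, rfl, hi⟩ := hy
      exact congrArg b1 (Fin.ext hi)
  · refine ⟨b2 ⟨0, hk⟩, ?_, ?_⟩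
    · exact adj_tB2.mpr ⟨_, rfl, rfl⟩
    · rintro y hy; rw [adj_tB2] at hy; obtain ⟨i, rfl, hi⟩ := hy
      exact congrArg b2 (Fin.ext hi)
  · exact ⟨v, adj_tv1.mpr rfl, fun y hy => adj_tv1.mp hy⟩
  · exact ⟨v, adj_tv2.mpr rfl, fun y hy => adj_tv2.mp hy⟩
  · exact ⟨v, adj_tv3.mpr rfl, fun y hy => adj_tv3.mp hy⟩

lemma nontail_two (hk : 2 ≤ k) {x : GadgetV k} (hx : ¬ IsTail x) :
    ∃ y z, y ≠ z ∧ (gadgetGraph A B).Adj x y ∧ (gadgetGraph A B).Adj x z := by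
  have h1 : 0 < k := by omega
  cases x
  case a1 i =>
    by_cases h : i.val + 1 < k
    · exact ⟨u, a1 ⟨i.val + 1, h⟩, by simp,
        adj_a1.mpr (Or.inr (Or.inr (Or.inl rfl))),
        adj_a1.mpr (Or.inl ⟨_, rfl, Or.inl rfl⟩)⟩
    · have hi : 1 ≤ i.val := by have := i.isLt; omega
      exact ⟨u, a1 ⟨i.val - 1, by omega⟩, by simp,
        adj_a1.mpr (Or.inr (Or.inr (Or.inl rfl))),
        adj_a1.mpr (Or.inl ⟨_, rfl, Or.inr (by simp; omega)⟩)⟩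
  case a2 i =>
    by_cases h : i.val + 1 < k
    · exact ⟨upp, a2 ⟨i.val + 1, h⟩, by simp,
        adj_a2.mpr (Or.inr (Or.inr (Or.inl rfl))),
        adj_a2.mpr (Or.inl ⟨_, rfl, Or.inl rfl⟩)⟩
    · have hi : 1 ≤ i.val := by have := i.isLt; omega
      exact ⟨upp, a2 ⟨i.val - 1, by omega⟩, by simp,
        adj_a2.mpr (Or.inr (Or.inr (Or.inl rfl))),
        adj_a2.mpr (Or.inl ⟨_, rfl, Or.inr (by simp; omega)⟩)⟩
  case b1 i =>
    by_cases h : i.val + 1 < k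
    · exact ⟨v, b1 ⟨i.val + 1, h⟩, by simp,
        adj_b1.mpr (Or.inr (Or.inr (Or.inl rfl))),
        adj_b1.mpr (Or.inl ⟨_, rfl, Or.inl rfl⟩)⟩
    · have hi : 1 ≤ i.val := by have := i.isLt; omega
      exact ⟨v, b1 ⟨i.val - 1, by omega⟩, by simp,
        adj_b1.mpr (Or.inr (Or.inr (Or.inl rfl))),
        adj_b1.mpr (Or.inl ⟨_, rfl, Or.inr (by simp; omega)⟩)⟩
  case b2 i =>
    by_cases h : i.val + 1 < k
    · exact ⟨vpp, b2 ⟨i.val + 1, h⟩, by simp,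
        adj_b2.mpr (Or.inr (Or.inr (Or.inl rfl))),
        adj_b2.mpr (Or.inl ⟨_, rfl, Or.inl rfl⟩)⟩
    · have hi : 1 ≤ i.val := by have := i.isLt; omega
      exact ⟨vpp, b2 ⟨i.val - 1, by omega⟩, by simp,
        adj_b2.mpr (Or.inr (Or.inr (Or.inl rfl))),
        adj_b2.mpr (Or.inl ⟨_, rfl, Or.inr (by simp; omega)⟩)⟩
  case u => exact ⟨up, tu1, by simp, adj_u.mpr (Or.inr (Or.inl rfl)),
      adj_u.mpr (Or.inr (Or.inr (Or.inl rfl)))⟩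
  case up => exact ⟨u, upp, by simp, adj_up.mpr (Or.inl rfl), adj_up.mpr (Or.inr rfl)⟩
  case upp => exact ⟨a2 ⟨0, h1⟩, up, by simp, adj_upp.mpr (Or.inl ⟨_, rfl⟩),
      adj_upp.mpr (Or.inr rfl)⟩
  case v => exact ⟨vp, tv1, by simp, adj_v.mpr (Or.inr (Or.inl rfl)),
      adj_v.mpr (Or.inr (Or.inr (Or.inl rfl)))⟩
  case vp => exact ⟨v, vpp, by simp, adj_vp.mpr (Or.inl rfl), adj_vp.mpr (Or.inr rfl)⟩
  case vpp => exact ⟨b2 ⟨0, h1⟩, vp, by simp, adj_vpp.mpr (Or.inl ⟨_, rfl⟩),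
      adj_vpp.mpr (Or.inr rfl)⟩
  all_goals exact absurd (by simp [IsTail]) hx

lemma tail_iff (hk : 2 ≤ k) {x : GadgetV k} :
    IsTail x ↔ ∃! y, (gadgetGraph A B).Adj x y := by
  constructor
  · exact tail_unique (by omega)
  · intro h
    by_contra hx
    obtain ⟨y, z, hyz, hy, hz⟩ := nontail_two hk hx
    obtain ⟨w, _, huniq⟩ := h
    exact hyz ((huniq y hy).trans (huniq z hz).symm)

/-! ### Transport along an isomorphism -/

variable {A' B' : Finset (Fin k × Fin k)}

lemma tail_map (hk : 2 ≤ k) (φ : gadgetGraph A B ≃g gadgetGraph A' B') {x : GadgetV k} :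
    IsTail x ↔ IsTail (φ x) := by
  rw [tail_iff (A := A) (B := B) hk, tail_iff (A := A') (B := B') hk]
  exact φ.toEquiv.existsUnique_congr fun y => (by exact φ.map_rel_iff.symm)

lemma tail_adj_elim {t x : GadgetV k} (ht : IsTail t) (h : (gadgetGraph A B).Adj x t) :
    (x = u ∧ (t = tu1 ∨ t = tu2)) ∨ (x = v ∧ (t = tv1 ∨ t = tv2 ∨ t = tv3)) ∨
      (∃ i : Fin k, i.val = 0 ∧ ((x = a1 i ∧ t = tA1) ∨ (x = a2 i ∧ t = tA2) ∨
        (x = b1 i ∧ t = tB1) ∨ (x = b2 i ∧ t = tB2))) := by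
  have h' := h.symm
  rcases ht with rfl|rfl|rfl|rfl|rfl|rfl|rfl|rfl|rfl
  · obtain ⟨i, rfl, hi⟩ := adj_tA1.mp h'
    exact Or.inr (Or.inr ⟨i, hi, Or.inl ⟨rfl, rfl⟩⟩)
  · obtain ⟨i, rfl, hi⟩ := adj_tA2.mp h'
    exact Or.inr (Or.inr ⟨i, hi, Or.inr (Or.inl ⟨rfl, rfl⟩)⟩)
  · exact Or.inl ⟨adj_tu1.mp h', Or.inl rfl⟩
  · exact Or.inl ⟨adj_tu2.mp h', Or.inr rfl⟩
  · obtain ⟨i, rfl, hi⟩ := adj_tB1.mp h'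
    exact Or.inr (Or.inr ⟨i, hi, Or.inr (Or.inr (Or.inl ⟨rfl, rfl⟩))⟩)
  · obtain ⟨i, rfl, hi⟩ := adj_tB2.mp h'
    exact Or.inr (Or.inr ⟨i, hi, Or.inr (Or.inr (Or.inr ⟨rfl, rfl⟩))⟩)
  · exact Or.inr (Or.inl ⟨adj_tv1.mp h', Or.inl rfl⟩)
  · exact Or.inr (Or.inl ⟨adj_tv2.mp h', Or.inr (Or.inl rfl)⟩)
  · exact Or.inr (Or.inl ⟨adj_tv3.mp h', Or.inr (Or.inr rfl)⟩)

def TwoTails (G : SimpleGraph (GadgetV k)) (x : GadgetV k) : Prop :=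
  ∃ t₁ t₂, t₁ ≠ t₂ ∧ IsTail t₁ ∧ IsTail t₂ ∧ G.Adj x t₁ ∧ G.Adj x t₂

def ThreeTails (G : SimpleGraph (GadgetV k)) (x : GadgetV k) : Prop :=
  ∃ t₁ t₂ t₃, t₁ ≠ t₂ ∧ t₁ ≠ t₃ ∧ t₂ ≠ t₃ ∧ IsTail t₁ ∧ IsTail t₂ ∧ IsTail t₃ ∧
    G.Adj x t₁ ∧ G.Adj x t₂ ∧ G.Adj x t₃

lemma twoTails_elim {x : GadgetV k} (hx : TwoTails (gadgetGraph A B) x) : x = u ∨ x = v := by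
  obtain ⟨t1, t2, hne, h1, h2, ha1, ha2⟩ := hx
  rcases tail_adj_elim h1 ha1 with ⟨rfl, _⟩ | ⟨rfl, _⟩ | ⟨i, hi, hcase⟩
  · exact Or.inl rfl
  · exact Or.inr rfl
  · exfalso
    rcases hcase with ⟨rfl, rfl⟩|⟨rfl, rfl⟩|⟨rfl, rfl⟩|⟨rfl, rfl⟩ <;>
      rcases tail_adj_elim h2 ha2 with ⟨h, _⟩ | ⟨h, _⟩ | ⟨j, hj, hc2⟩ <;>
        simp_all

lemma adj_u_tail {t : GadgetV k} (ht : IsTail t) (h : (gadgetGraph A B).Adj u t) :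
    t = tu1 ∨ t = tu2 := by
  rcases tail_adj_elim ht h with ⟨_, h2⟩ | ⟨h2, _⟩ | ⟨i, _, hc⟩
  · exact h2
  · exact absurd h2 (by simp)
  · rcases hc with ⟨h2, _⟩|⟨h2, _⟩|⟨h2, _⟩|⟨h2, _⟩ <;> exact absurd h2 (by simp)

lemma threeTails_elim {x : GadgetV k} (hx : ThreeTails (gadgetGraph A B) x) : x = v := by
  obtain ⟨t1, t2, t3, h12, h13, h23, ht1, ht2, ht3, ha1, ha2, ha3⟩ := hx
  rcases twoTails_elim (A := A) (B := B) ⟨t1, t2, h12, ht1, ht2, ha1, ha2⟩ with rfl | rfl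
  · exfalso
    rcases adj_u_tail ht1 ha1 with rfl | rfl <;>
      rcases adj_u_tail ht2 ha2 with rfl | rfl <;>
        rcases adj_u_tail ht3 ha3 with rfl | rfl <;> simp_all
  · rfl

lemma threeTails_v : ThreeTails (gadgetGraph A B) (v : GadgetV k) := by
  refine ⟨tv1, tv2, tv3, by simp, by simp, by simp, ?_, ?_, ?_, ?_, ?_, ?_⟩ <;>
    first
      | simp [IsTail]
      | exact adj_v.mpr (by simp)

lemma twoTails_u : TwoTails (gadgetGraph A B) (u : GadgetV k) := by
  refine ⟨tu1, tu2, by simp, ?_, ?_, ?_, ?_⟩ <;>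
    first
      | simp [IsTail]
      | exact adj_u.mpr (by simp)

lemma threeTails_map (hk : 2 ≤ k) (φ : gadgetGraph A B ≃g gadgetGraph A' B') {x : GadgetV k}
    (hx : ThreeTails (gadgetGraph A B) x) : ThreeTails (gadgetGraph A' B') (φ x) := by
  obtain ⟨t1, t2, t3, h12, h13, h23, ht1, ht2, ht3, ha1, ha2, ha3⟩ := hx
  exact ⟨φ t1, φ t2, φ t3,
    fun h => h12 (φ.toEquiv.injective h), fun h => h13 (φ.toEquiv.injective h),
    fun h => h23 (φ.toEquiv.injective h),
    (tail_map hk φ).mp ht1, (tail_map hk φ).mp ht2, (tail_map hk φ).mp ht3,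
    φ.map_rel_iff.mpr ha1, φ.map_rel_iff.mpr ha2, φ.map_rel_iff.mpr ha3⟩

lemma twoTails_map (hk : 2 ≤ k) (φ : gadgetGraph A B ≃g gadgetGraph A' B') {x : GadgetV k}
    (hx : TwoTails (gadgetGraph A B) x) : TwoTails (gadgetGraph A' B') (φ x) := by
  obtain ⟨t1, t2, h12, ht1, ht2, ha1, ha2⟩ := hx
  exact ⟨φ t1, φ t2, fun h => h12 (φ.toEquiv.injective h),
    (tail_map hk φ).mp ht1, (tail_map hk φ).mp ht2,
    φ.map_rel_iff.mpr ha1, φ.map_rel_iff.mpr ha2⟩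

lemma map_v (hk : 2 ≤ k) (φ : gadgetGraph A B ≃g gadgetGraph A' B') : φ v = v :=
  threeTails_elim (threeTails_map hk φ threeTails_v)

lemma map_u (hk : 2 ≤ k) (φ : gadgetGraph A B ≃g gadgetGraph A' B') : φ u = u := by
  rcases twoTails_elim (twoTails_map hk φ twoTails_u) with h | h
  · exact h
  · rw [← map_v hk φ] at h
    exact absurd (φ.toEquiv.injective h) (by simp)

/-! ### Locating the path vertices -/

def NearU (G : SimpleGraph (GadgetV k)) (x : GadgetV k) : Prop :=
  G.Adj u x ∧ ∃ w, G.Adj u w ∧ G.Adj x w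

def NearV (G : SimpleGraph (GadgetV k)) (x : GadgetV k) : Prop :=
  G.Adj v x ∧ ∃ w, G.Adj v w ∧ G.Adj x w

lemma nearU_iff (hk : 2 ≤ k) {x : GadgetV k} :
    NearU (gadgetGraph A B) x ↔ ∃ i, x = a1 i := by
  constructor
  · rintro ⟨hux, w, huw, hxw⟩
    rcases adj_u.mp hux with h | rfl | rfl | rfl | rfl
    · exact h
    · rcases adj_up.mp hxw with rfl | rfl
      · exact absurd huw (gadgetGraph A B).irrefl
      · rw [adj_u] at huw; simp at huw
    · rw [adj_tu1] at hxw; subst hxw; exact absurd huw (gadgetGraph A B).irrefl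
    · rw [adj_tu2] at hxw; subst hxw; exact absurd huw (gadgetGraph A B).irrefl
    · rcases adj_v.mp hxw with ⟨i, rfl⟩ | rfl | rfl | rfl | rfl | rfl <;>
        first
          | (rw [adj_u] at huw; simp at huw)
          | exact absurd huw (gadgetGraph A B).irrefl
  · rintro ⟨i, rfl⟩
    refine ⟨adj_u.mpr (Or.inl ⟨i, rfl⟩), ?_⟩
    by_cases h : i.val + 1 < k
    · exact ⟨a1 ⟨i.val + 1, h⟩, adj_u.mpr (Or.inl ⟨_, rfl⟩),
        adj_a1.mpr (Or.inl ⟨_, rfl, Or.inl rfl⟩)⟩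
    · have hi : 1 ≤ i.val := by have := i.isLt; omega
      exact ⟨a1 ⟨i.val - 1, by omega⟩, adj_u.mpr (Or.inl ⟨_, rfl⟩),
        adj_a1.mpr (Or.inl ⟨_, rfl, Or.inr (by simp; omega)⟩)⟩

lemma nearV_iff (hk : 2 ≤ k) {x : GadgetV k} :
    NearV (gadgetGraph A B) x ↔ ∃ i, x = b1 i := by
  constructor
  · rintro ⟨hvx, w, hvw, hxw⟩
    rcases adj_v.mp hvx with h | rfl | rfl | rfl | rfl | rfl
    · exact h
    · rcases adj_vp.mp hxw with rfl | rfl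
      · exact absurd hvw (gadgetGraph A B).irrefl
      · rw [adj_v] at hvw; simp at hvw
    · rw [adj_tv1] at hxw; subst hxw; exact absurd hvw (gadgetGraph A B).irrefl
    · rw [adj_tv2] at hxw; subst hxw; exact absurd hvw (gadgetGraph A B).irrefl
    · rw [adj_tv3] at hxw; subst hxw; exact absurd hvw (gadgetGraph A B).irrefl
    · rcases adj_u.mp hxw with ⟨i, rfl⟩ | rfl | rfl | rfl | rfl <;>
        first
          | (rw [adj_v] at hvw; simp at hvw)
          | exact absurd hvw (gadgetGraph A B).irrefl
  · rintro ⟨i, rfl⟩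
    refine ⟨adj_v.mpr (Or.inl ⟨i, rfl⟩), ?_⟩
    by_cases h : i.val + 1 < k
    · exact ⟨b1 ⟨i.val + 1, h⟩, adj_v.mpr (Or.inl ⟨_, rfl⟩),
        adj_b1.mpr (Or.inl ⟨_, rfl, Or.inl rfl⟩)⟩
    · have hi : 1 ≤ i.val := by have := i.isLt; omega
      exact ⟨b1 ⟨i.val - 1, by omega⟩, adj_v.mpr (Or.inl ⟨_, rfl⟩),
        adj_b1.mpr (Or.inl ⟨_, rfl, Or.inr (by simp; omega)⟩)⟩

lemma nearU_map (φ : gadgetGraph A B ≃g gadgetGraph A' B') (hu : φ u = u) {x : GadgetV k}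
    (hx : NearU (gadgetGraph A B) x) : NearU (gadgetGraph A' B') (φ x) := by
  obtain ⟨h1, w, h2, h3⟩ := hx
  exact ⟨hu ▸ φ.map_rel_iff.mpr h1, φ w, hu ▸ φ.map_rel_iff.mpr h2, φ.map_rel_iff.mpr h3⟩

lemma nearV_map (φ : gadgetGraph A B ≃g gadgetGraph A' B') (hv : φ v = v) {x : GadgetV k}
    (hx : NearV (gadgetGraph A B) x) : NearV (gadgetGraph A' B') (φ x) := by
  obtain ⟨h1, w, h2, h3⟩ := hx
  exact ⟨hv ▸ φ.map_rel_iff.mpr h1, φ w, hv ▸ φ.map_rel_iff.mpr h2, φ.map_rel_iff.mpr h3⟩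

lemma symm_u (hk : 2 ≤ k) (φ : gadgetGraph A B ≃g gadgetGraph A' B') : φ.symm u = u :=
  calc φ.symm u = φ.symm (φ u) := by rw [map_u hk φ]
    _ = u := φ.symm_apply_apply u

lemma symm_v (hk : 2 ≤ k) (φ : gadgetGraph A B ≃g gadgetGraph A' B') : φ.symm v = v :=
  calc φ.symm v = φ.symm (φ v) := by rw [map_v hk φ]
    _ = v := φ.symm_apply_apply v

lemma map_a1 (hk : 2 ≤ k) (φ : gadgetGraph A B ≃g gadgetGraph A' B') (i : Fin k) :
    ∃ j, φ (a1 i) = a1 j :=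
  (nearU_iff hk).mp (nearU_map φ (map_u hk φ) ((nearU_iff hk).mpr ⟨i, rfl⟩))

lemma map_b1 (hk : 2 ≤ k) (φ : gadgetGraph A B ≃g gadgetGraph A' B') (i : Fin k) :
    ∃ j, φ (b1 i) = b1 j :=
  (nearV_iff hk).mp (nearV_map φ (map_v hk φ) ((nearV_iff hk).mpr ⟨i, rfl⟩))

lemma map_up (hk : 2 ≤ k) (φ : gadgetGraph A B ≃g gadgetGraph A' B') : φ up = up := by
  have h1 : (gadgetGraph A' B').Adj u (φ up) := by
    rw [← map_u hk φ]
    exact φ.map_rel_iff.mpr (adj_u.mpr (Or.inr (Or.inl rfl)))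
  rcases adj_u.mp h1 with ⟨i, hi⟩ | h | h | h | h
  · exfalso
    have hN : NearU (gadgetGraph A' B') (φ up) := (nearU_iff hk).mpr ⟨i, hi⟩
    have hN2 := nearU_map φ.symm (symm_u hk φ) hN
    rw [φ.symm_apply_apply] at hN2
    obtain ⟨j, hj⟩ := (nearU_iff hk).mp hN2
    simp at hj
  · exact h
  · exact absurd ((tail_map hk φ).mpr (by rw [h]; simp [IsTail])) (by simp [IsTail])
  · exact absurd ((tail_map hk φ).mpr (by rw [h]; simp [IsTail])) (by simp [IsTail])
  · rw [← map_v hk φ] at h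
    exact absurd (φ.toEquiv.injective h) (by simp)

lemma map_vp (hk : 2 ≤ k) (φ : gadgetGraph A B ≃g gadgetGraph A' B') : φ vp = vp := by
  have h1 : (gadgetGraph A' B').Adj v (φ vp) := by
    rw [← map_v hk φ]
    exact φ.map_rel_iff.mpr (adj_v.mpr (Or.inr (Or.inl rfl)))
  rcases adj_v.mp h1 with ⟨i, hi⟩ | h | h | h | h | h
  · exfalso
    have hN : NearV (gadgetGraph A' B') (φ vp) := (nearV_iff hk).mpr ⟨i, hi⟩
    have hN2 := nearV_map φ.symm (symm_v hk φ) hN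
    rw [φ.symm_apply_apply] at hN2
    obtain ⟨j, hj⟩ := (nearV_iff hk).mp hN2
    simp at hj
  · exact h
  · exact absurd ((tail_map hk φ).mpr (by rw [h]; simp [IsTail])) (by simp [IsTail])
  · exact absurd ((tail_map hk φ).mpr (by rw [h]; simp [IsTail])) (by simp [IsTail])
  · exact absurd ((tail_map hk φ).mpr (by rw [h]; simp [IsTail])) (by simp [IsTail])
  · rw [← map_u hk φ] at h
    exact absurd (φ.toEquiv.injective h) (by simp)

lemma map_upp (hk : 2 ≤ k) (φ : gadgetGraph A B ≃g gadgetGraph A' B') : φ upp = upp := by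
  have h1 : (gadgetGraph A' B').Adj up (φ upp) := by
    rw [← map_up hk φ]
    exact φ.map_rel_iff.mpr (adj_up.mpr (Or.inr rfl))
  rcases adj_up.mp h1 with h | h
  · rw [← map_u hk φ] at h
    exact absurd (φ.toEquiv.injective h) (by simp)
  · exact h

lemma map_vpp (hk : 2 ≤ k) (φ : gadgetGraph A B ≃g gadgetGraph A' B') : φ vpp = vpp := by
  have h1 : (gadgetGraph A' B').Adj vp (φ vpp) := by
    rw [← map_vp hk φ]
    exact φ.map_rel_iff.mpr (adj_vp.mpr (Or.inr rfl))
  rcases adj_vp.mp h1 with h | h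
  · rw [← map_v hk φ] at h
    exact absurd (φ.toEquiv.injective h) (by simp)
  · exact h

lemma map_a2 (hk : 2 ≤ k) (φ : gadgetGraph A B ≃g gadgetGraph A' B') (i : Fin k) :
    ∃ j, φ (a2 i) = a2 j := by
  have h1 : (gadgetGraph A' B').Adj upp (φ (a2 i)) := by
    rw [← map_upp hk φ]
    exact φ.map_rel_iff.mpr (adj_upp.mpr (Or.inl ⟨i, rfl⟩))
  rcases adj_upp.mp h1 with h | h
  · exact h
  · rw [← map_up hk φ] at h
    exact absurd (φ.toEquiv.injective h) (by simp)

lemma map_b2 (hk : 2 ≤ k) (φ : gadgetGraph A B ≃g gadgetGraph A' B') (i : Fin k) :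
    ∃ j, φ (b2 i) = b2 j := by
  have h1 : (gadgetGraph A' B').Adj vpp (φ (b2 i)) := by
    rw [← map_vpp hk φ]
    exact φ.map_rel_iff.mpr (adj_vpp.mpr (Or.inl ⟨i, rfl⟩))
  rcases adj_vpp.mp h1 with h | h
  · exact h
  · rw [← map_vp hk φ] at h
    exact absurd (φ.toEquiv.injective h) (by simp)

/-! ### Rigidity of paths -/

lemma fin_path_id {k : ℕ} (g : Fin k → Fin k) (hinj : Function.Injective g)
    (h0 : ∀ (h : 0 < k), g ⟨0, h⟩ = ⟨0, h⟩)
    (hadj : ∀ i j : Fin k, i.val + 1 = j.val →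
      ((g i).val + 1 = (g j).val ∨ (g j).val + 1 = (g i).val)) :
    ∀ i, g i = i := by
  have key : ∀ m (h : m < k), g ⟨m, h⟩ = ⟨m, h⟩ := by
    intro m
    induction m using Nat.strong_induction_on with
    | _ m IH =>
      intro h
      match m with
      | 0 => exact h0 h
      | (n+1) =>
        have hn : n < k := by omega
        have hgn : g ⟨n, hn⟩ = ⟨n, hn⟩ := IH n (by omega) hn
        rcases hadj ⟨n, hn⟩ ⟨n+1, h⟩ rfl with hc | hc
        · rw [hgn] at hc
          exact Fin.ext (by simpa using hc.symm)
        · exfalso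
          rw [hgn] at hc
          simp only [] at hc
          have hcv : (g ⟨n+1, h⟩).val + 1 = n := hc
          have hn1 : n - 1 < k := by omega
          have he1 : g ⟨n+1, h⟩ = ⟨n - 1, hn1⟩ := Fin.ext (by simp; omega)
          have he2 : g ⟨n - 1, hn1⟩ = ⟨n - 1, hn1⟩ := IH (n-1) (by omega) hn1
          have := hinj (he1.trans he2.symm)
          have := congrArg Fin.val this
          simp at this
          omega
  exact fun i => by rw [show i = ⟨i.val, i.isLt⟩ from Fin.ext rfl]; exact key i.val i.isLt

lemma a1_id (hk : 2 ≤ k) (φ : gadgetGraph A B ≃g gadgetGraph A' B') (i : Fin k) :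
    φ (a1 i) = a1 i := by
  have hchoice := map_a1 hk φ
  choose f hf using hchoice
  have hinj : Function.Injective f := by
    intro i j h
    have h2 : φ (a1 i) = φ (a1 j) := by rw [hf, hf, h]
    simpa using φ.toEquiv.injective h2
  have h0 : ∀ (h : 0 < k), f ⟨0, h⟩ = ⟨0, h⟩ := by
    intro h
    have ht : (gadgetGraph A B).Adj (a1 ⟨0, h⟩) tA1 :=
      adj_a1.mpr (Or.inr (Or.inr (Or.inr ⟨rfl, rfl⟩)))
    have ht' : (gadgetGraph A' B').Adj (a1 (f ⟨0, h⟩)) (φ tA1) := by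
      rw [← hf]; exact φ.map_rel_iff.mpr ht
    have htt : IsTail (φ tA1) := (tail_map hk φ).mp (by simp [IsTail])
    rcases tail_adj_elim htt ht' with ⟨h2, _⟩ | ⟨h2, _⟩ | ⟨i, hi, hc⟩
    · exact absurd h2 (by simp)
    · exact absurd h2 (by simp)
    · rcases hc with ⟨h2, _⟩|⟨h2, _⟩|⟨h2, _⟩|⟨h2, _⟩
      · simp only [a1.injEq] at h2
        exact Fin.ext (by rw [h2]; exact hi)
      · exact absurd h2 (by simp)
      · exact absurd h2 (by simp)
      · exact absurd h2 (by simp)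
  have hadj : ∀ i j : Fin k, i.val + 1 = j.val →
      ((f i).val + 1 = (f j).val ∨ (f j).val + 1 = (f i).val) := by
    intro i j hij
    have h1 : (gadgetGraph A B).Adj (a1 i) (a1 j) := adj_a1.mpr (Or.inl ⟨j, rfl, Or.inl hij⟩)
    have h2 : (gadgetGraph A' B').Adj (a1 (f i)) (a1 (f j)) := by
      rw [← hf, ← hf]; exact φ.map_rel_iff.mpr h1
    rcases adj_a1.mp h2 with ⟨j', hj', hcond⟩ | ⟨j', hj', _⟩ | h | ⟨h, _⟩
    · simp only [a1.injEq] at hj'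
      rwa [← hj'] at hcond
    · exact absurd hj' (by simp)
    · exact absurd h (by simp)
    · exact absurd h (by simp)
  rw [hf]; exact congrArg a1 (fin_path_id f hinj h0 hadj i)

lemma a2_id (hk : 2 ≤ k) (φ : gadgetGraph A B ≃g gadgetGraph A' B') (i : Fin k) :
    φ (a2 i) = a2 i := by
  have hchoice := map_a2 hk φ
  choose f hf using hchoice
  have hinj : Function.Injective f := by
    intro i j h
    have h2 : φ (a2 i) = φ (a2 j) := by rw [hf, hf, h]
    simpa using φ.toEquiv.injective h2
  have h0 : ∀ (h : 0 < k), f ⟨0, h⟩ = ⟨0, h⟩ := by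
    intro h
    have ht : (gadgetGraph A B).Adj (a2 ⟨0, h⟩) tA2 :=
      adj_a2.mpr (Or.inr (Or.inr (Or.inr ⟨rfl, rfl⟩)))
    have ht' : (gadgetGraph A' B').Adj (a2 (f ⟨0, h⟩)) (φ tA2) := by
      rw [← hf]; exact φ.map_rel_iff.mpr ht
    have htt : IsTail (φ tA2) := (tail_map hk φ).mp (by simp [IsTail])
    rcases tail_adj_elim htt ht' with ⟨h2, _⟩ | ⟨h2, _⟩ | ⟨i, hi, hc⟩
    · exact absurd h2 (by simp)
    · exact absurd h2 (by simp)
    · rcases hc with ⟨h2, _⟩|⟨h2, _⟩|⟨h2, _⟩|⟨h2, _⟩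
      · exact absurd h2 (by simp)
      · simp only [a2.injEq] at h2
        exact Fin.ext (by rw [h2]; exact hi)
      · exact absurd h2 (by simp)
      · exact absurd h2 (by simp)
  have hadj : ∀ i j : Fin k, i.val + 1 = j.val →
      ((f i).val + 1 = (f j).val ∨ (f j).val + 1 = (f i).val) := by
    intro i j hij
    have h1 : (gadgetGraph A B).Adj (a2 i) (a2 j) := adj_a2.mpr (Or.inl ⟨j, rfl, Or.inl hij⟩)
    have h2 : (gadgetGraph A' B').Adj (a2 (f i)) (a2 (f j)) := by
      rw [← hf, ← hf]; exact φ.map_rel_iff.mpr h1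
    rcases adj_a2.mp h2 with ⟨j', hj', hcond⟩ | ⟨j', hj', _⟩ | h | ⟨h, _⟩
    · simp only [a2.injEq] at hj'
      rwa [← hj'] at hcond
    · exact absurd hj' (by simp)
    · exact absurd h (by simp)
    · exact absurd h (by simp)
  rw [hf]; exact congrArg a2 (fin_path_id f hinj h0 hadj i)

lemma b1_id (hk : 2 ≤ k) (φ : gadgetGraph A B ≃g gadgetGraph A' B') (i : Fin k) :
    φ (b1 i) = b1 i := by
  have hchoice := map_b1 hk φ
  choose f hf using hchoice
  have hinj : Function.Injective f := by
    intro i j h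
    have h2 : φ (b1 i) = φ (b1 j) := by rw [hf, hf, h]
    simpa using φ.toEquiv.injective h2
  have h0 : ∀ (h : 0 < k), f ⟨0, h⟩ = ⟨0, h⟩ := by
    intro h
    have ht : (gadgetGraph A B).Adj (b1 ⟨0, h⟩) tB1 :=
      adj_b1.mpr (Or.inr (Or.inr (Or.inr ⟨rfl, rfl⟩)))
    have ht' : (gadgetGraph A' B').Adj (b1 (f ⟨0, h⟩)) (φ tB1) := by
      rw [← hf]; exact φ.map_rel_iff.mpr ht
    have htt : IsTail (φ tB1) := (tail_map hk φ).mp (by simp [IsTail])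
    rcases tail_adj_elim htt ht' with ⟨h2, _⟩ | ⟨h2, _⟩ | ⟨i, hi, hc⟩
    · exact absurd h2 (by simp)
    · exact absurd h2 (by simp)
    · rcases hc with ⟨h2, _⟩|⟨h2, _⟩|⟨h2, _⟩|⟨h2, _⟩
      · exact absurd h2 (by simp)
      · exact absurd h2 (by simp)
      · simp only [b1.injEq] at h2
        exact Fin.ext (by rw [h2]; exact hi)
      · exact absurd h2 (by simp)
  have hadj : ∀ i j : Fin k, i.val + 1 = j.val →
      ((f i).val + 1 = (f j).val ∨ (f j).val + 1 = (f i).val) := by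
    intro i j hij
    have h1 : (gadgetGraph A B).Adj (b1 i) (b1 j) := adj_b1.mpr (Or.inl ⟨j, rfl, Or.inl hij⟩)
    have h2 : (gadgetGraph A' B').Adj (b1 (f i)) (b1 (f j)) := by
      rw [← hf, ← hf]; exact φ.map_rel_iff.mpr h1
    rcases adj_b1.mp h2 with ⟨j', hj', hcond⟩ | ⟨j', hj', _⟩ | h | ⟨h, _⟩
    · simp only [b1.injEq] at hj'
      rwa [← hj'] at hcond
    · exact absurd hj' (by simp)
    · exact absurd h (by simp)
    · exact absurd h (by simp)
  rw [hf]; exact congrArg b1 (fin_path_id f hinj h0 hadj i)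

lemma b2_id (hk : 2 ≤ k) (φ : gadgetGraph A B ≃g gadgetGraph A' B') (i : Fin k) :
    φ (b2 i) = b2 i := by
  have hchoice := map_b2 hk φ
  choose f hf using hchoice
  have hinj : Function.Injective f := by
    intro i j h
    have h2 : φ (b2 i) = φ (b2 j) := by rw [hf, hf, h]
    simpa using φ.toEquiv.injective h2
  have h0 : ∀ (h : 0 < k), f ⟨0, h⟩ = ⟨0, h⟩ := by
    intro h
    have ht : (gadgetGraph A B).Adj (b2 ⟨0, h⟩) tB2 :=
      adj_b2.mpr (Or.inr (Or.inr (Or.inr ⟨rfl, rfl⟩)))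
    have ht' : (gadgetGraph A' B').Adj (b2 (f ⟨0, h⟩)) (φ tB2) := by
      rw [← hf]; exact φ.map_rel_iff.mpr ht
    have htt : IsTail (φ tB2) := (tail_map hk φ).mp (by simp [IsTail])
    rcases tail_adj_elim htt ht' with ⟨h2, _⟩ | ⟨h2, _⟩ | ⟨i, hi, hc⟩
    · exact absurd h2 (by simp)
    · exact absurd h2 (by simp)
    · rcases hc with ⟨h2, _⟩|⟨h2, _⟩|⟨h2, _⟩|⟨h2, _⟩
      · exact absurd h2 (by simp)
      · exact absurd h2 (by simp)
      · exact absurd h2 (by simp)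
      · simp only [b2.injEq] at h2
        exact Fin.ext (by rw [h2]; exact hi)
  have hadj : ∀ i j : Fin k, i.val + 1 = j.val →
      ((f i).val + 1 = (f j).val ∨ (f j).val + 1 = (f i).val) := by
    intro i j hij
    have h1 : (gadgetGraph A B).Adj (b2 i) (b2 j) := adj_b2.mpr (Or.inl ⟨j, rfl, Or.inl hij⟩)
    have h2 : (gadgetGraph A' B').Adj (b2 (f i)) (b2 (f j)) := by
      rw [← hf, ← hf]; exact φ.map_rel_iff.mpr h1
    rcases adj_b2.mp h2 with ⟨j', hj', hcond⟩ | ⟨j', hj', _⟩ | h | ⟨h, _⟩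
    · simp only [b2.injEq] at hj'
      rwa [← hj'] at hcond
    · exact absurd hj' (by simp)
    · exact absurd h (by simp)
    · exact absurd h (by simp)
  rw [hf]; exact congrArg b2 (fin_path_id f hinj h0 hadj i)

lemma adj_a1_a2 {i j : Fin k} : (gadgetGraph A B).Adj (a1 i) (a2 j) ↔ (i, j) ∈ A := by
  rw [adj_a1]; simp

lemma adj_b1_b2 {i j : Fin k} : (gadgetGraph A B).Adj (b1 i) (b2 j) ↔ (i, j) ∈ B := by
  rw [adj_b1]; simp

end GadgetProof

/-- `G_{A,B}` is isomorphic to `G_{A',B'}` iff `A = A'` and `B = B'`. -/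
theorem stmt_9 (k : ℕ) (hk : 3 ≤ k) (A B A' B' : Finset (Fin k × Fin k)) :
    Nonempty (gadgetGraph A B ≃g gadgetGraph A' B') ↔ A = A' ∧ B = B' := by
  constructor
  · rintro ⟨φ⟩
    have hk2 : 2 ≤ k := by omega
    constructor
    · ext ⟨i, j⟩
      calc (i, j) ∈ A ↔ (gadgetGraph A B).Adj (GadgetV.a1 i) (GadgetV.a2 j) :=
            GadgetProof.adj_a1_a2.symm
        _ ↔ (gadgetGraph A' B').Adj (φ (GadgetV.a1 i)) (φ (GadgetV.a2 j)) :=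
            φ.map_rel_iff.symm
        _ ↔ (i, j) ∈ A' := by
            rw [GadgetProof.a1_id hk2 φ i, GadgetProof.a2_id hk2 φ j]
            exact GadgetProof.adj_a1_a2
    · ext ⟨i, j⟩
      calc (i, j) ∈ B ↔ (gadgetGraph A B).Adj (GadgetV.b1 i) (GadgetV.b2 j) :=
            GadgetProof.adj_b1_b2.symm
        _ ↔ (gadgetGraph A' B').Adj (φ (GadgetV.b1 i)) (φ (GadgetV.b2 j)) :=
            φ.map_rel_iff.symm
        _ ↔ (i, j) ∈ B' := by
            rw [GadgetProof.b1_id hk2 φ i, GadgetProof.b2_id hk2 φ j]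
            exact GadgetProof.adj_b1_b2
  · rintro ⟨rfl, rfl⟩
    exact ⟨RelIso.refl _⟩
end

section
/- Let T be a rooted tree of depth d on the vertex set of a graph, and suppose each vertex holds one number in [n^{c+2}]. If each vertex forwards messages (ID, number) upward with messages of strictly larger numbers given priority, one message per round per edge, then after at most d + s rounds the root has received the s messages with the s largest numbers: the i-th largest message is delayed at most i − 1 rounds beyond its depth. -/
open Finset

/-- pipelined convergecast with priority to larger numbers: on a rooted tree
of depth `d`, where each vertex originates one message holding a distinct number and, in each
round, every vertex forwards to its parent the not-yet-forwarded message with the largest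
number (one message per edge per round), the message with the `i`-th largest number reaches
the root within `depth + (i-1)` rounds; in particular after `d + s` rounds the root holds all
`s` messages with the `s` largest numbers.

The protocol is modeled by `pos t v`, the location at time `t` of the message originated at
`v`, subject to: initial placement, moving only along parent edges, at most one message
crossing any edge per round (work obeying capacity), and the greedy priority rule (a message
waits at a non-root vertex only if a message with a larger number crossed upward from that
vertex in that round). -/
theorem stmt_15 {V : Type*} [Fintype V] [DecidableEq V]
    (r : V) (parent : V → V) (depth : V → ℕ) (d s : ℕ)
    (hroot : parent r = r)
    (hpar : ∀ v : V, v ≠ r → parent v ≠ v)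
    (hdepth_root : depth r = 0)
    (hdepth : ∀ v : V, v ≠ r → depth v = depth (parent v) + 1)
    (hreach : ∀ v : V, parent^[depth v] v = r)
    (hd : ∀ v : V, depth v ≤ d)
    (num : V → ℕ) (hnum : Function.Injective num)
    (pos : ℕ → V → V)
    (hpos0 : ∀ v : V, pos 0 v = v)
    (hstep : ∀ (t : ℕ) (v : V), pos (t + 1) v = pos t v ∨ pos (t + 1) v = parent (pos t v))
    (hcap : ∀ (t : ℕ) (w : V),
      ({x : V | pos t x = w ∧ pos (t + 1) x ≠ pos t x} : Set V).Subsingleton)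
    (hprio : ∀ (t : ℕ) (v : V), pos t v ≠ r → pos (t + 1) v = pos t v →
      ∃ x : V, num v < num x ∧ pos t x = pos t v ∧
        pos (t + 1) x = parent (pos t v) ∧ pos (t + 1) x ≠ pos t x) :
    (∀ v : V,
      pos (depth v + ((Finset.univ.filter (fun x : V => num v < num x)).card)) v = r)
    ∧ ∀ v : V, (Finset.univ.filter (fun x : V => num v ≤ num x)).card ≤ s →
        pos (d + s) v = r := by
  -- depth zero iff root
  have hdepth0 : ∀ w : V, depth w = 0 → w = r := by
    intro w h
    have h2 := hreach w
    rwa [h, Function.iterate_zero_apply] at h2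
  have hrne : ∀ w : V, w ≠ r → 1 ≤ depth w := by
    intro w h
    rcases Nat.eq_zero_or_pos (depth w) with h0 | h1
    · exact absurd (hdepth0 w h0) h
    · exact h1
  have hdp : ∀ w : V, w ≠ r → depth (parent w) + 1 = depth w := fun w h => (hdepth w h).symm
  -- root is absorbing
  have habs : ∀ (t : ℕ) (u : V), pos t u = r → pos (t+1) u = r := by
    intro t u h
    rcases hstep t u with h1 | h1
    · rw [h1, h]
    · rw [h1, h, hroot]
  have habs' : ∀ (t t' : ℕ) (u : V), t ≤ t' → pos t u = r → pos t' u = r := by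
    intro t t' u h hr
    obtain ⟨m, rfl⟩ := Nat.exists_eq_add_of_le h
    clear h
    induction m with
    | zero => exact hr
    | succ m ih => exact habs (t+m) u ih
  have hmove : ∀ (t : ℕ) (u : V), pos (t+1) u ≠ pos t u → pos (t+1) u = parent (pos t u) :=
    fun t u h => (hstep t u).resolve_left h
  -- if all larger messages are at the root by time T, then v marches straight to the root
  have march : ∀ (v : V) (T : ℕ), (∀ x : V, num v < num x → pos T x = r) → ∃ t, pos t v = r := by
    intro v T hT
    by_contra hno
    push_neg at hno
    have claim : ∀ m, depth (pos (T+m) v) + m ≤ depth (pos T v) := by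
      intro m
      induction m with
      | zero => simp
      | succ m ih =>
        have hv := hno (T+m)
        have hmv : pos (T+m+1) v ≠ pos (T+m) v := by
          intro hstay
          obtain ⟨x, hx1, hx2, _, _⟩ := hprio (T+m) v hv hstay
          have hxr : pos (T+m) x = r := habs' T (T+m) x (Nat.le_add_right _ _) (hT x hx1)
          rw [hx2] at hxr
          exact hv hxr
        have hdd : depth (pos (T+m+1) v) + 1 = depth (pos (T+m) v) := by
          rw [hmove _ _ hmv]; exact hdp _ hv
        show depth (pos (T+m+1) v) + (m+1) ≤ depth (pos T v)
        omega
    have h2 := claim (depth (pos T v) + 1)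
    omega
  -- a uniform time by which a finite set of messages has arrived
  have hUnif : ∀ (L : Finset V), (∀ x ∈ L, ∃ t, pos t x = r) → ∃ T, ∀ x ∈ L, pos T x = r := by
    intro L
    induction L using Finset.induction_on with
    | empty => intro _; exact ⟨0, fun x hx => absurd hx (Finset.notMem_empty x)⟩
    | @insert a s ha ih =>
      intro h
      obtain ⟨T1, h1⟩ := ih (fun x hx => h x (Finset.mem_insert_of_mem hx))
      obtain ⟨t2, h2⟩ := h a (Finset.mem_insert_self a s)
      refine ⟨max t2 T1, fun x hx => ?_⟩
      rcases Finset.mem_insert.1 hx with rfl | hx'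
      · exact habs' t2 _ x (le_max_left _ _) h2
      · exact habs' T1 _ x (le_max_right _ _) (h1 x hx')
  -- every message eventually arrives
  have hArr : ∀ v : V, ∃ t, pos t v = r := by
    have key : ∀ (n : ℕ) (v : V), (univ.filter fun x : V => num v < num x).card ≤ n →
        ∃ t, pos t v = r := by
      intro n
      induction n with
      | zero =>
        intro v hn
        apply march v 0
        intro x hx
        exfalso
        have hmem : x ∈ univ.filter (fun y : V => num v < num y) :=
          mem_filter.2 ⟨mem_univ _, hx⟩
        have hpos' := Finset.card_pos.2 ⟨x, hmem⟩
        omega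
      | succ n IH =>
        intro v hn
        have hx_arr : ∀ x ∈ univ.filter (fun y : V => num v < num y), ∃ t, pos t x = r := by
          intro x hx
          have hx' : num v < num x := (mem_filter.1 hx).2
          apply IH x
          have hss : (univ.filter fun y : V => num x < num y) ⊂ (univ.filter fun y : V => num v < num y) := by
            refine ⟨fun y hy => mem_filter.2 ⟨mem_univ _, lt_trans hx' (mem_filter.1 hy).2⟩, fun hcon => ?_⟩
            have h4 := hcon hx
            exact lt_irrefl _ (mem_filter.1 h4).2
          have h5 := Finset.card_lt_card hss
          omega
        obtain ⟨T, hT⟩ := hUnif _ hx_arr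
        apply march v T
        intro x hx
        exact hT x (mem_filter.2 ⟨mem_univ _, hx⟩)
    intro v
    exact key _ v le_rfl
  -- arrival times
  obtain ⟨A, hAspec, hAmin⟩ : ∃ A : V → ℕ, (∀ u, pos (A u) u = r) ∧ (∀ u t, pos t u = r → A u ≤ t) :=
    ⟨fun u => Nat.find (hArr u), fun u => Nat.find_spec (hArr u), fun u t h => Nat.find_le h⟩
  have hAlive : ∀ (u : V) (t : ℕ), pos t u ≠ r → t < A u := by
    intro u t h
    by_contra h2
    push_neg at h2
    exact h (habs' (A u) t u h2 (hAspec u))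
  -- key chain lemma: if x moves at time t from depth p, some z with num z ≥ num x arrives exactly at t + p
  have hW : ∀ (p : ℕ) (x : V) (t : ℕ), depth (pos t x) = p → pos t x ≠ r →
      pos (t+1) x ≠ pos t x → ∃ z : V, num x ≤ num z ∧ A z = t + p := by
    intro p
    induction p with
    | zero => intro x t h0 hne _; exact absurd (hdepth0 _ h0) hne
    | succ p IH =>
      intro x t hpd hne hmv
      have hpm : pos (t+1) x = parent (pos t x) := hmove t x hmv
      have hq : depth (pos (t+1) x) = p := by
        have h2 : depth (parent (pos t x)) + 1 = depth (pos t x) := hdp _ hne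
        rw [hpm]
        omega
      by_cases hq0 : p = 0
      · have hr2 : pos (t+1) x = r := hdepth0 _ (by rw [hq, hq0])
        have h1 : A x ≤ t + 1 := hAmin x (t+1) hr2
        have h2 : t < A x := hAlive x t hne
        exact ⟨x, le_refl _, by omega⟩
      · have hne2 : pos (t+1) x ≠ r := by
          intro h
          rw [h, hdepth_root] at hq
          omega
        rcases eq_or_ne (pos (t+1+1) x) (pos (t+1) x) with hstay | hmv2
        · obtain ⟨y, hy1, hy2, _, hy4⟩ := hprio (t+1) x hne2 hstay
          obtain ⟨z, hz1, hz2⟩ := IH y (t+1) (by rw [hy2]; exact hq) (by rw [hy2]; exact hne2) hy4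
          exact ⟨z, le_trans (le_of_lt hy1) hz1, by omega⟩
        · obtain ⟨z, hz1, hz2⟩ := IH x (t+1) hq hne2 hmv2
          exact ⟨z, hz1, by omega⟩
  -- the potential decreases strictly each round while v is away from the root
  have hdec : ∀ (t : ℕ) (v : V), pos (t+1) v ≠ r →
      depth (pos (t+1) v) + (univ.filter (fun x : V => num v < num x ∧ pos (t+1) x ≠ r ∧ (t+1) + depth (pos (t+1) v) ≤ A x)).card + 1
        ≤ depth (pos t v) + (univ.filter (fun x : V => num v < num x ∧ pos t x ≠ r ∧ t + depth (pos t v) ≤ A x)).card := by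
    intro t v hne1
    have hne : pos t v ≠ r := fun h => hne1 (habs t v h)
    have hp1 : 1 ≤ depth (pos t v) := hrne _ hne
    rcases eq_or_ne (pos (t+1) v) (pos t v) with hstay | hmv
    · -- v is delayed
      have hde : depth (pos (t+1) v) = depth (pos t v) := by rw [hstay]
      obtain ⟨x, hxnum, hxpos, _, hxmv⟩ := hprio t v hne hstay
      obtain ⟨z, hz1, hz2⟩ := hW (depth (pos t x)) x t rfl (by rw [hxpos]; exact hne) hxmv
      rw [hxpos] at hz2
      have hzalive : pos t z ≠ r := by
        intro h
        have h5 := hAmin z t h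
        omega
      have hzin : z ∈ univ.filter (fun x : V => num v < num x ∧ pos t x ≠ r ∧ t + depth (pos t v) ≤ A x) :=
        mem_filter.2 ⟨mem_univ _, lt_of_lt_of_le hxnum hz1, hzalive, by omega⟩
      have hznot : z ∉ univ.filter (fun x : V => num v < num x ∧ pos (t+1) x ≠ r ∧ (t+1) + depth (pos (t+1) v) ≤ A x) := by
        intro hmem
        have h2 := (mem_filter.1 hmem).2.2.2
        omega
      have hsub : (univ.filter (fun x : V => num v < num x ∧ pos (t+1) x ≠ r ∧ (t+1) + depth (pos (t+1) v) ≤ A x)) ⊆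
          (univ.filter (fun x : V => num v < num x ∧ pos t x ≠ r ∧ t + depth (pos t v) ≤ A x)) := by
        intro y hy
        obtain ⟨hy0, hy1, hy2, hy3⟩ := mem_filter.1 hy
        exact mem_filter.2 ⟨hy0, hy1, fun h => hy2 (habs t y h), by omega⟩
      have hcard := Finset.card_lt_card ((Finset.ssubset_iff_of_subset hsub).2 ⟨z, hzin, hznot⟩)
      omega
    · -- v moves
      have hdd : depth (pos (t+1) v) + 1 = depth (pos t v) := by
        rw [hmove _ _ hmv]; exact hdp _ hne
      have hsub : (univ.filter (fun x : V => num v < num x ∧ pos (t+1) x ≠ r ∧ (t+1) + depth (pos (t+1) v) ≤ A x)) ⊆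
          (univ.filter (fun x : V => num v < num x ∧ pos t x ≠ r ∧ t + depth (pos t v) ≤ A x)) := by
        intro y hy
        obtain ⟨hy0, hy1, hy2, hy3⟩ := mem_filter.1 hy
        exact mem_filter.2 ⟨hy0, hy1, fun h => hy2 (habs t y h), by omega⟩
      have hcard := Finset.card_le_card hsub
      omega
  -- summing the decrease
  have hsum : ∀ (t : ℕ) (v : V), pos t v ≠ r →
      t + (depth (pos t v) + (univ.filter (fun x : V => num v < num x ∧ pos t x ≠ r ∧ t + depth (pos t v) ≤ A x)).card)
        ≤ depth (pos 0 v) + (univ.filter (fun x : V => num v < num x ∧ pos 0 x ≠ r ∧ 0 + depth (pos 0 v) ≤ A x)).card := by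
    intro t
    induction t with
    | zero => intro v _; omega
    | succ t IH =>
      intro v h
      have h' : pos t v ≠ r := fun hr => h (habs t v hr)
      have h1 := hdec t v h
      have h2 := IH v h'
      omega
  -- part 1
  have main : ∀ v : V, pos (depth v + ((Finset.univ.filter (fun x : V => num v < num x)).card)) v = r := by
    intro v
    by_contra hcon
    have h1 := hsum _ v hcon
    have h2 : 1 ≤ depth (pos (depth v + ((Finset.univ.filter (fun x : V => num v < num x)).card)) v) :=
      hrne _ hcon
    have h3 : (univ.filter (fun x : V => num v < num x ∧ pos 0 x ≠ r ∧ 0 + depth (pos 0 v) ≤ A x)).card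
        ≤ (Finset.univ.filter (fun x : V => num v < num x)).card :=
      Finset.card_le_card (fun y hy => mem_filter.2 ⟨(mem_filter.1 hy).1, (mem_filter.1 hy).2.1⟩)
    have h4 : depth (pos 0 v) = depth v := by rw [hpos0]
    omega
  refine ⟨main, ?_⟩
  intro v hv
  have hK : (Finset.univ.filter (fun x : V => num v < num x)).card
      < (Finset.univ.filter (fun x : V => num v ≤ num x)).card := by
    apply Finset.card_lt_card
    refine (Finset.ssubset_iff_of_subset (fun y hy => mem_filter.2 ⟨(mem_filter.1 hy).1, le_of_lt (mem_filter.1 hy).2⟩)).2 ?_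
    exact ⟨v, mem_filter.2 ⟨mem_univ _, le_refl _⟩, fun hmem => lt_irrefl _ (mem_filter.1 hmem).2⟩
  have hdv := hd v
  exact habs' _ _ v (by omega) (main v)
end
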